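/- arXiv:1708.08274 — 2 statements merged into one kernel-verified Lean document; each statement's English description precedes it below -/
import Mathlib

section
/- Let Problem A1 maximize Σ_j z_j·v_j − Σ_i Σ_{k∈S_i} x_{i,k}·c_{i,k} over binary x subject to the budget constraints Σ_{k∈S_i} x_{i,k}·c_{i,k} ≤ C_i, with y_k = max{x_{i,k} : i with k ∈ S_i} and z_j = min{y_k : k ∈ K_j}. Let Problem A2 be the same maximization over binary (x, y, z) subject to the budget constraints, y_k ≥ x_{i,k} for all i with k ∈ S_i, y_k ≤ Σ_{i: k∈S_i} x_{i,k}, and z_j ≤ y_k for all k ∈ K_j. If v_j > 0 for every j, then Problems A1 and A2 have the same optimal value, and any maximizer of A2 yields a maximizer of A1 with the same objective value (Lemma 2 and Theorem 1). -/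
open Finset

/-- An MCS (Mobile Crowd Sensing) instance: users `I`, tasks `J`, data items `K`,
sensing capabilities `S`, sensing costs `c`, budgets `C`,
data requirements `req`, and task valuations `v`. -/
structure MCS (I J K : Type*) where
  S : I → Finset K
  c : I → K → ℝ
  C : I → ℝ
  req : J → Finset K
  v : J → ℝ

variable {I J K : Type*} [Fintype I] [Fintype J] [Fintype K] [DecidableEq K]

/-- Total sensing cost of a schedule `x`. -/
def MCS.cost (M : MCS I J K) (x : I → K → ℕ) : ℝ :=
  ∑ i, ∑ k ∈ M.S i, (x i k : ℝ) * M.c i k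

/-- Social welfare: total valuation of completed tasks minus total sensing cost. -/
def MCS.welfare (M : MCS I J K) (x : I → K → ℕ) (z : J → ℕ) : ℝ :=
  (∑ j, (z j : ℝ) * M.v j) - M.cost x

/-- Budget-feasible binary schedule, supported on the users' sensing capabilities. -/
def MCS.feasible (M : MCS I J K) (x : I → K → ℕ) : Prop :=
  (∀ i k, x i k = 0 ∨ x i k = 1) ∧
  (∀ i k, k ∉ M.S i → x i k = 0) ∧
  (∀ i, ∑ k ∈ M.S i, (x i k : ℝ) * M.c i k ≤ M.C i)

/-- `y_k = max { x_{i,k} : i with k ∈ S_i }`: whether data item `k` is sensed. -/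
def MCS.ysense (M : MCS I J K) (x : I → K → ℕ) (k : K) : ℕ :=
  (univ.filter fun i => k ∈ M.S i).sup fun i => x i k

/-- `z_j = min { y_k : k ∈ K_j }`: whether task `j` is completed. -/
def MCS.zdone (M : MCS I J K) (x : I → K → ℕ) (j : J) : ℕ :=
  if ∀ k ∈ M.req j, M.ysense x k = 1 then 1 else 0

/-- `x` is a welfare-maximizing budget-feasible schedule. -/
def MCS.optAssign (M : MCS I J K) (x : I → K → ℕ) : Prop :=
  M.feasible x ∧
  ∀ x', M.feasible x' → M.welfare x' (M.zdone x') ≤ M.welfare x (M.zdone x)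

/-- Standard model assumptions: nonnegative costs, positive budgets,
positive valuations, nonempty data requirements. -/
def MCS.valid (M : MCS I J K) : Prop :=
  (∀ i k, 0 ≤ M.c i k) ∧ (∀ i, 0 < M.C i) ∧ (∀ j, 0 < M.v j) ∧ (∀ j, (M.req j).Nonempty)

/-- Feasibility for Problem A2: binary variables `x, y, z`, budget constraints,
`x_{i,k} ≤ y_k` for all `i` with `k ∈ S_i`, `y_k ≤ ∑_{i : k ∈ S_i} x_{i,k}`,
and the relaxed constraints `z_j ≤ y_k` for all `k ∈ K_j`. -/
def MCS.A2Feasible (M : MCS I J K) (x : I → K → ℕ) (y : K → ℕ) (z : J → ℕ) : Prop :=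
  (∀ i k, x i k = 0 ∨ x i k = 1) ∧
  (∀ i k, k ∉ M.S i → x i k = 0) ∧
  (∀ k, y k = 0 ∨ y k = 1) ∧
  (∀ j, z j = 0 ∨ z j = 1) ∧
  (∀ i, ∑ k ∈ M.S i, (x i k : ℝ) * M.c i k ≤ M.C i) ∧
  (∀ i k, k ∈ M.S i → x i k ≤ y k) ∧
  (∀ k, y k ≤ ∑ i ∈ univ.filter (fun i => k ∈ M.S i), x i k) ∧
  (∀ j, ∀ k ∈ M.req j, z j ≤ y k)

/-!
With every `v_j > 0`, lowering some `z_j` below `min_{k ∈ K_j} y_k`, which is all the relaxed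
constraint `z_j ≤ y_k` of A2 permits, can only lose welfare; so an A2 optimum may take the
induced completion vector for `z`. The constraints `x_{i,k} ≤ y_k ≤ ∑_i x_{i,k}` force `y` to be
the induced sensing vector of `x`, hence A2-feasible points are A1-feasible, and every
A1-feasible `x` lifts to an A2-feasible point with the same welfare.
-/

namespace MCS

omit [Fintype K] [DecidableEq K] in
theorem welfare_mono (M : MCS I J K) (hv : ∀ j, 0 ≤ M.v j) (x : I → K → ℕ)
    {z₁ z₂ : J → ℕ} (hz : ∀ j, z₁ j ≤ z₂ j) : M.welfare x z₁ ≤ M.welfare x z₂ :=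
  sub_le_sub_right (sum_le_sum fun j _ =>
    mul_le_mul_of_nonneg_right (Nat.cast_le.mpr (hz j)) (hv j)) _

omit [Fintype J] [Fintype K] in
theorem le_ysense (M : MCS I J K) (x : I → K → ℕ) {i : I} {k : K} (hk : k ∈ M.S i) :
    x i k ≤ M.ysense x k :=
  le_sup (f := fun i => x i k) (mem_filter.mpr ⟨mem_univ i, hk⟩)

omit [Fintype J] [Fintype K] in
theorem ysense_le_sum (M : MCS I J K) (x : I → K → ℕ) (k : K) :
    M.ysense x k ≤ ∑ i ∈ univ.filter (fun i => k ∈ M.S i), x i k :=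
  Finset.sup_le fun _ hi => single_le_sum (f := fun i => x i k) (fun _ _ => Nat.zero_le _) hi

omit [Fintype J] [Fintype K] in
theorem ysense_le_one (M : MCS I J K) {x : I → K → ℕ} (hx : ∀ i k, x i k = 0 ∨ x i k = 1)
    (k : K) : M.ysense x k ≤ 1 :=
  Finset.sup_le fun i _ => (hx i k).elim (·.trans_le zero_le_one) (·.le)

omit [Fintype J] in
theorem zdone_eq_zero_or_one (M : MCS I J K) (x : I → K → ℕ) (j : J) :
    M.zdone x j = 0 ∨ M.zdone x j = 1 := by
  unfold zdone
  split <;> simp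

omit [Fintype J] in
theorem zdone_le_ysense (M : MCS I J K) (x : I → K → ℕ) {j : J} {k : K}
    (hk : k ∈ M.req j) : M.zdone x j ≤ M.ysense x k := by
  unfold zdone
  split
  case isTrue hall => rw [hall k hk]
  case isFalse => exact Nat.zero_le _

omit [Fintype J] [Fintype K] in
theorem A2Feasible.feasible {M : MCS I J K} {x : I → K → ℕ} {y : K → ℕ} {z : J → ℕ}
    (h : M.A2Feasible x y z) : M.feasible x :=
  ⟨h.1, h.2.1, h.2.2.2.2.1⟩

omit [Fintype J] in
theorem A2Feasible.of_feasible {M : MCS I J K} {x : I → K → ℕ} (hx : M.feasible x) :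
    M.A2Feasible x (M.ysense x) (M.zdone x) := by
  obtain ⟨hx01, hxS, hbud⟩ := hx
  refine ⟨hx01, hxS, fun k => ?_, M.zdone_eq_zero_or_one x, hbud,
    fun i k hk => M.le_ysense x hk, M.ysense_le_sum x, fun j k hk => M.zdone_le_ysense x hk⟩
  have := M.ysense_le_one hx01 k
  omega

omit [Fintype J] [Fintype K] in
theorem A2Feasible.ysense_eq {M : MCS I J K} {x : I → K → ℕ} {y : K → ℕ} {z : J → ℕ}
    (h : M.A2Feasible x y z) (k : K) : M.ysense x k = y k := by
  obtain ⟨-, -, hy01, -, -, hxy, hyx, -⟩ := h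
  refine le_antisymm (Finset.sup_le fun i hi => hxy i k (mem_filter.mp hi).2) ?_
  rcases hy01 k with hy | hy
  · exact hy ▸ Nat.zero_le _
  · obtain ⟨i, hi, hxi⟩ : ∃ i ∈ univ.filter (fun i => k ∈ M.S i), x i k ≠ 0 :=
      exists_ne_zero_of_sum_ne_zero (by have := hyx k; omega)
    have := M.le_ysense x (mem_filter.mp hi).2
    omega

omit [Fintype J] in
theorem A2Feasible.le_zdone {M : MCS I J K} {x : I → K → ℕ} {y : K → ℕ} {z : J → ℕ}
    (h : M.A2Feasible x y z) (j : J) : z j ≤ M.zdone x j := by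
  have hys := h.ysense_eq
  obtain ⟨-, -, hy01, hz01, -, -, -, hzy⟩ := h
  rcases hz01 j with hz | hz
  · exact hz ▸ Nat.zero_le _
  · have hsensed : ∀ k ∈ M.req j, M.ysense x k = 1 := fun k hk => by
      have := hzy j k hk
      rcases hy01 k with hy | hy <;> rw [hys k] <;> omega
    rw [hz, zdone, if_pos hsensed]

end MCS

theorem A1_equiv_A2_general (M : MCS I J K)
    (hv : ∀ j, 0 < M.v j)
    (x : I → K → ℕ) (y : K → ℕ) (z : J → ℕ)
    (hfeas : M.A2Feasible x y z)
    (hopt : ∀ x' y' z', M.A2Feasible x' y' z' → M.welfare x' z' ≤ M.welfare x z) :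
    M.feasible x ∧
    M.welfare x (M.zdone x) = M.welfare x z ∧
    ∀ x', M.feasible x' → M.welfare x' (M.zdone x') ≤ M.welfare x (M.zdone x) := by
  have hx : M.feasible x := hfeas.feasible
  have heq : M.welfare x (M.zdone x) = M.welfare x z :=
    le_antisymm (hopt _ _ _ (.of_feasible hx))
      (M.welfare_mono (fun j => (hv j).le) x hfeas.le_zdone)
  exact ⟨hx, heq, fun x' hx' => heq ▸ hopt _ _ _ (.of_feasible hx')⟩

/-- **Lemma 2 and Theorem 1 (equivalence of Problems A1 and A2).**
Problem A1 maximizes `W(x) = ∑_j z_j v_j − ∑_i ∑_{k ∈ S_i} x_{i,k} c_{i,k}` over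
budget-feasible binary `x`, with induced `y_k = max_{i : k ∈ S_i} x_{i,k}` and
`z_j = min_{k ∈ K_j} y_k`.  Problem A2 is the relaxed formulation `MCS.A2Feasible`.
If `v_j > 0` for every `j`, then any maximizer `(x, y, z)` of Problem A2 yields a
maximizer `x` of Problem A1 with the same objective value; in particular the two
problems have the same optimal value. -/
theorem A1_equiv_A2 (M : MCS I J K)
    (hc : ∀ i k, 0 ≤ M.c i k) (hC : ∀ i, 0 < M.C i)
    (hv : ∀ j, 0 < M.v j) (hne : ∀ j, (M.req j).Nonempty)
    (x : I → K → ℕ) (y : K → ℕ) (z : J → ℕ)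
    (hfeas : M.A2Feasible x y z)
    (hopt : ∀ x' y' z', M.A2Feasible x' y' z' → M.welfare x' z' ≤ M.welfare x z) :
    M.feasible x ∧
    M.welfare x (M.zdone x) = M.welfare x z ∧
    ∀ x', M.feasible x' → M.welfare x' (M.zdone x') ≤ M.welfare x (M.zdone x) :=
  A1_equiv_A2_general M hv x y z hfeas hopt
end

section
/- The VCG double auction Ω is not (weakly) budget balanced: there exists an MCS instance in which, under truthful bidding, the total VCG payment collected from the task planners is strictly smaller than the total VCG reward paid to the users. Concretely, in the instance with two tasks requiring the same single data item, with valuations v_1 = 0.5 and v_2 = 0.6, and one user able to sense that data item at cost 0.2 (within budget), the welfare-maximizing assignment schedules the user and completes both tasks with social welfare 0.9, the user's VCG reward is 1.1, and each task planner's VCG payment is 0, so the platform's budget is −1.1. -/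
open Finset

variable {I J K : Type*} [Fintype I] [Fintype J] [Fintype K] [DecidableEq K]

/-- The bid profile `B` with user `i`'s reported type replaced by `(Si, ci, Ci)`. -/
def MCS.updUser [DecidableEq I] (B : MCS I J K) (i : I)
    (Si : Finset K) (ci : K → ℝ) (Ci : ℝ) : MCS I J K :=
  { B with
    S := Function.update B.S i Si
    c := Function.update B.c i ci
    C := Function.update B.C i Ci }

/-- The bid profile `B` with task planner `j`'s reported type replaced by `(Kj, vj)`. -/
def MCS.updTask [DecidableEq J] (B : MCS I J K) (j : J)
    (Kj : Finset K) (vj : ℝ) : MCS I J K :=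
  { B with
    req := Function.update B.req j Kj
    v := Function.update B.v j vj }

/-- `W` is the maximum social welfare `W^o_{−i}` when user `i` is removed
(i.e. over feasible schedules in which user `i` senses nothing). -/
def MCS.optWelfareExclUser (B : MCS I J K) (i : I) (W : ℝ) : Prop :=
  (∃ x, B.feasible x ∧ (∀ k, x i k = 0) ∧ B.welfare x (B.zdone x) = W) ∧
  (∀ x, B.feasible x → (∀ k, x i k = 0) → B.welfare x (B.zdone x) ≤ W)

/-- Social welfare of schedule `x` with task `j` removed. -/
def MCS.welfareExclTask [DecidableEq J] (B : MCS I J K) (j : J) (x : I → K → ℕ) : ℝ :=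
  (∑ l ∈ univ.erase j, (B.zdone x l : ℝ) * B.v l) - B.cost x

/-- `W` is the maximum social welfare `W^o_{−j}` when task `j` is removed. -/
def MCS.optWelfareExclTask [DecidableEq J] (B : MCS I J K) (j : J) (W : ℝ) : Prop :=
  (∃ x, B.feasible x ∧ B.welfareExclTask j x = W) ∧
  (∀ x, B.feasible x → B.welfareExclTask j x ≤ W)

/-- VCG reward to user `i`:
`r_i = ∑_j z^o_j v_j − ∑_{l ≠ i} ∑_{k ∈ S_l} x^o_{l,k} c_{l,k} − W^o_{−i}`
(all quantities evaluated at the reported bids `B`). -/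
def MCS.rewardUser [DecidableEq I] (B : MCS I J K) (x : I → K → ℕ) (i : I) (Wmi : ℝ) : ℝ :=
  (∑ j, (B.zdone x j : ℝ) * B.v j)
    - (∑ l ∈ univ.erase i, ∑ k ∈ B.S l, (x l k : ℝ) * B.c l k)
    - Wmi

/-- VCG payment of task planner `j`:
`p_j = W^o_{−j} − ∑_{l ≠ j} z^o_l v_l + ∑_i ∑_{k ∈ S_i} x^o_{i,k} c_{i,k}`
(all quantities evaluated at the reported bids `B`). -/
def MCS.paymentTask [DecidableEq J] (B : MCS I J K) (x : I → K → ℕ) (j : J) (Wmj : ℝ) : ℝ :=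
  Wmj - (∑ l ∈ univ.erase j, (B.zdone x l : ℝ) * B.v l) + B.cost x

/-- The true value realized by a task planner with true type `(Kj, vj)` under schedule `x`:
`vj` if every truly required data item is sensed, and `0` otherwise. -/
def MCS.trueTaskValue (B : MCS I J K) (x : I → K → ℕ) (Kj : Finset K) (vj : ℝ) : ℝ :=
  if ∀ k ∈ Kj, B.ysense x k = 1 then vj else 0

/-- The concrete counterexample instance. -/
def Mex : MCS (Fin 1) (Fin 2) (Fin 1) where
  S _ := {0}
  c _ _ := 0.2
  C _ := 1
  req _ := {0}
  v j := if j = 0 then 0.5 else 0.6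

lemma Mex_cost (x : Fin 1 → Fin 1 → ℕ) : Mex.cost x = (x 0 0 : ℝ) * 0.2 := by
  simp [Mex, MCS.cost]

lemma Mex_ysense (x : Fin 1 → Fin 1 → ℕ) : Mex.ysense x 0 = x 0 0 := by
  simp [Mex, MCS.ysense, Finset.filter_true_of_mem]

lemma Mex_zdone (x : Fin 1 → Fin 1 → ℕ) (j : Fin 2) :
    Mex.zdone x j = if x 0 0 = 1 then 1 else 0 := by
  have : Mex.req j = {0} := rfl
  simp [MCS.zdone, this, Mex_ysense]

lemma Mex_welfare (x : Fin 1 → Fin 1 → ℕ) :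
    Mex.welfare x (Mex.zdone x) =
      (if x 0 0 = 1 then (1.1 : ℝ) else 0) - (x 0 0 : ℝ) * 0.2 := by
  rw [MCS.welfare, Mex_cost, Fin.sum_univ_two, Mex_zdone, Mex_zdone]
  by_cases h : x 0 0 = 1 <;> simp [h, Mex] <;> norm_num

lemma Mex_feasible (x : Fin 1 → Fin 1 → ℕ) (h : ∀ i k, x i k = 0 ∨ x i k = 1) :
    Mex.feasible x := by
  refine ⟨h, fun i k hk => absurd (by simp [Mex, Subsingleton.elim k 0] : k ∈ Mex.S i) hk,
    fun i => ?_⟩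
  rw [show i = 0 from Subsingleton.elim i 0]
  rcases h 0 0 with h0 | h0 <;> simp [Mex, h0] <;> norm_num

lemma Mex_welfare_le (x : Fin 1 → Fin 1 → ℕ) (h : Mex.feasible x) :
    Mex.welfare x (Mex.zdone x) ≤ 0.9 := by
  rw [Mex_welfare]
  rcases h.1 0 0 with h0 | h0 <;> simp [h0] <;> norm_num

lemma eraseU : (Finset.univ.erase (0 : Fin 1)) = ∅ := by decide
lemma erase0 : (Finset.univ.erase (0 : Fin 2)) = {1} := by decide
lemma erase1 : (Finset.univ.erase (1 : Fin 2)) = {0} := by decide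

lemma fin2_cases (j : Fin 2) : j = 0 ∨ j = 1 := by omega

lemma Mex_welfareExclTask (j : Fin 2) (x : Fin 1 → Fin 1 → ℕ) :
    Mex.welfareExclTask j x =
      (if x 0 0 = 1 then (if j = 0 then (0.6 : ℝ) else 0.5) else 0) - (x 0 0 : ℝ) * 0.2 := by
  rcases fin2_cases j with hj | hj <;> subst hj <;>
    rw [MCS.welfareExclTask, Mex_cost] <;>
    [rw [erase0, Finset.sum_singleton, Mex_zdone]; rw [erase1, Finset.sum_singleton, Mex_zdone]] <;>
    by_cases h : x 0 0 = 1 <;> simp [h, Mex]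

/-- **The VCG double auction `Ω` is not (weakly) budget balanced.**  There is an MCS
instance — one user who can sense a single data item at cost `0.2` (within budget), and
two tasks requiring that same data item with valuations `0.5` and `0.6` — in which, under
truthful bidding, the welfare-maximizing assignment schedules the user and completes both
tasks with social welfare `0.9`, the user's VCG reward is `1.1`, each task planner's VCG
payment is `0`, and hence the total payment collected from the task planners is strictly
smaller than the total reward paid to the users (the platform's budget is `−1.1`). -/
theorem vcg_not_budget_balanced :
    ∃ (M : MCS (Fin 1) (Fin 2) (Fin 1)) (xo : Fin 1 → Fin 1 → ℕ)
      (Wmi : ℝ) (Wmj : Fin 2 → ℝ),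
      -- the concrete instance
      (∀ i k, 0 ≤ M.c i k) ∧ (∀ i, 0 < M.C i) ∧ (∀ j, 0 < M.v j) ∧
        (∀ j, (M.req j).Nonempty) ∧
      M.v 0 = 0.5 ∧ M.v 1 = 0.6 ∧ M.c 0 0 = 0.2 ∧
      (∀ j, M.req j = {0}) ∧ M.S 0 = {0} ∧
      -- `xo` is a welfare-maximizing assignment, it schedules the user
      -- and completes both tasks, with social welfare 0.9
      M.optAssign xo ∧ xo 0 0 = 1 ∧ (∀ j, M.zdone xo j = 1) ∧
      M.welfare xo (M.zdone xo) = 0.9 ∧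
      -- the VCG quantities
      M.optWelfareExclUser 0 Wmi ∧ (∀ j, M.optWelfareExclTask j (Wmj j)) ∧
      M.rewardUser xo 0 Wmi = 1.1 ∧ (∀ j, M.paymentTask xo j (Wmj j) = 0) ∧
      -- budget imbalance: total payment < total reward
      (∑ j, M.paymentTask xo j (Wmj j)) < (∑ i, M.rewardUser xo i Wmi) := by
  classical
  refine ⟨Mex, fun _ _ => 1, 0, fun j => if j = 0 then 0.4 else 0.3,
    ?_, ?_, ?_, ?_, rfl, rfl, rfl, fun j => rfl, rfl, ?_, rfl, ?_, ?_, ?_, ?_, ?_, ?_, ?_⟩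
  · intro i k; norm_num [Mex]
  · intro i; norm_num [Mex]
  · intro j; rcases fin2_cases j with hj | hj <;> subst hj <;> norm_num [Mex]
  · intro j; exact ⟨0, by simp [Mex]⟩
  -- optAssign
  · refine ⟨Mex_feasible _ (fun _ _ => Or.inr rfl), fun x' hx' => ?_⟩
    have h1 : Mex.welfare (fun _ _ => 1) (Mex.zdone fun _ _ => 1) = 0.9 := by
      rw [Mex_welfare]; norm_num
    rw [h1]; exact Mex_welfare_le x' hx'
  -- zdone = 1
  · intro j; rw [Mex_zdone]; simp
  -- welfare = 0.9
  · rw [Mex_welfare]; norm_num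
  -- optWelfareExclUser
  · constructor
    · exact ⟨fun _ _ => 0, Mex_feasible _ (fun _ _ => Or.inl rfl), fun _ => rfl,
        by rw [Mex_welfare]; norm_num⟩
    · intro x hx h0
      rw [Mex_welfare, h0 0]; norm_num
  -- optWelfareExclTask
  · intro j
    constructor
    · refine ⟨fun _ _ => 1, Mex_feasible _ (fun _ _ => Or.inr rfl), ?_⟩
      rw [Mex_welfareExclTask]
      rcases fin2_cases j with hj | hj <;> subst hj <;> norm_num
    · intro x hx
      rw [Mex_welfareExclTask]
      rcases hx.1 0 0 with h0 | h0 <;> rcases fin2_cases j with hj | hj <;> subst hj <;>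
        simp [h0] <;> norm_num
  -- reward = 1.1
  · rw [MCS.rewardUser, eraseU, Fin.sum_univ_two, Mex_zdone, Mex_zdone]
    norm_num [Mex]
  -- payments = 0
  · intro j
    rw [MCS.paymentTask, Mex_cost]
    rcases fin2_cases j with hj | hj <;> subst hj <;>
      [rw [erase0, Finset.sum_singleton, Mex_zdone]; rw [erase1, Finset.sum_singleton, Mex_zdone]] <;>
      norm_num [Mex]
  -- imbalance
  · rw [Fin.sum_univ_two, Fin.sum_univ_one,
        MCS.paymentTask, MCS.paymentTask, MCS.rewardUser, Mex_cost,
        eraseU, erase0, erase1, Finset.sum_singleton, Finset.sum_singleton,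
        Fin.sum_univ_two]
    simp only [Mex_zdone]
    norm_num [Mex]
end
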